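/- Fix a, b ∈ ℝ and let V be the space of 6-tuples (γ₀, γ₁, γ₂, γ₃, a, b) where γ₀,…,γ₃ are smooth real-valued functions on ℝ (2π-periodic) and the last two slots are reals. For smooth 2π-periodic f, define linear operators on V by: ad*_{L_f}(γ₀,γ₁,γ₂,γ₃,a,b) = (a f''' + 2γ₀f' + γ₀'f, 2γ₁f' + γ₁'f, 2γ₂f' + γ₂'f, γ₃f' + γ₃'f, 0, 0); ad*_{J_f}(γ₀,γ₁,γ₂,γ₃,a,b) = (γ₃f', γ₂f, −γ₁f, b f', 0, 0); ad*_{P¹_f}(γ₀,γ₁,γ₂,γ₃,a,b) = (2γ₁f' + γ₁'f, 0, 0, −γ₂f, 0, 0); ad*_{P²_f}(γ₀,γ₁,γ₂,γ₃,a,b) = (2γ₂f' + γ₂'f, 0, 0, γ₁f, 0, 0). Then these operators satisfy the coadjoint representation property: [ad*_{L_f}, ad*_{L_g}] = ad*_{L_{fg'−f'g}}, [ad*_{L_f}, ad*_{P^i_g}] = ad*_{P^i_{fg'−f'g}}, [ad*_{L_f}, ad*_{J_g}] = ad*_{J_{fg'}}, [ad*_{J_f}, ad*_{P^i_g}] =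 −Σ_k ε_{ik} ad*_{P^k_{fg}}, and [ad*_{J_f}, ad*_{J_g}] = [ad*_{P^i_f}, ad*_{P^j_g}] = 0, where [A,B] = A∘B − B∘A and ε_{12} = −ε_{21} = 1, ε_{11} = ε_{22} = 0. -/

import Mathlib

/-!
STATEMENT 13: The coadjoint action formulas of Proposition 2 on 6-tuples
(γ₀, γ₁, γ₂, γ₃, a, b) define a representation of the current form of the
centrally extended planar Galilean conformal algebra:
[ad*_{L_f}, ad*_{L_g}] = ad*_{L_{fg'−f'g}}, [ad*_{L_f}, ad*_{P^i_g}] =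
ad*_{P^i_{fg'−f'g}}, [ad*_{L_f}, ad*_{J_g}] = ad*_{J_{fg'}},
[ad*_{J_f}, ad*_{P¹_g}] = −ad*_{P²_{fg}}, [ad*_{J_f}, ad*_{P²_g}] = ad*_{P¹_{fg}}
(i.e. [ad*_{J_f}, ad*_{P^i_g}] = −Σ_k ε_{ik} ad*_{P^k_{fg}}), and
[ad*_{J_f}, ad*_{J_g}] = [ad*_{P^i_f}, ad*_{P^j_g}] = 0.
-/

noncomputable section

open Real

/-- The space of 6-tuples (γ₀, γ₁, γ₂, γ₃, a, b): four functions and two reals. -/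
abbrev V : Type := (ℝ → ℝ) × (ℝ → ℝ) × (ℝ → ℝ) × (ℝ → ℝ) × ℝ × ℝ

/-- ad*_{L_f}(γ₀,γ₁,γ₂,γ₃,a,b)
= (a f''' + 2γ₀f' + γ₀'f, 2γ₁f' + γ₁'f, 2γ₂f' + γ₂'f, γ₃f' + γ₃'f, 0, 0). -/
def adL (f : ℝ → ℝ) (v : V) : V :=
  (fun θ => v.2.2.2.2.1 * deriv (deriv (deriv f)) θ +
      2 * v.1 θ * deriv f θ + deriv v.1 θ * f θ,
   fun θ => 2 * v.2.1 θ * deriv f θ + deriv v.2.1 θ * f θ,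
   fun θ => 2 * v.2.2.1 θ * deriv f θ + deriv v.2.2.1 θ * f θ,
   fun θ => v.2.2.2.1 θ * deriv f θ + deriv v.2.2.2.1 θ * f θ,
   0, 0)

/-- ad*_{J_f}(γ₀,γ₁,γ₂,γ₃,a,b) = (γ₃f', γ₂f, −γ₁f, b f', 0, 0). -/
def adJ (f : ℝ → ℝ) (v : V) : V :=
  (fun θ => v.2.2.2.1 θ * deriv f θ,
   fun θ => v.2.2.1 θ * f θ,
   fun θ => -v.2.1 θ * f θ,
   fun θ => v.2.2.2.2.2 * deriv f θ,
   0, 0)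

/-- ad*_{P¹_f}(γ₀,γ₁,γ₂,γ₃,a,b) = (2γ₁f' + γ₁'f, 0, 0, −γ₂f, 0, 0). -/
def adP1 (f : ℝ → ℝ) (v : V) : V :=
  (fun θ => 2 * v.2.1 θ * deriv f θ + deriv v.2.1 θ * f θ,
   0, 0,
   fun θ => -v.2.2.1 θ * f θ,
   0, 0)

/-- ad*_{P²_f}(γ₀,γ₁,γ₂,γ₃,a,b) = (2γ₂f' + γ₂'f, 0, 0, γ₁f, 0, 0). -/
def adP2 (f : ℝ → ℝ) (v : V) : V :=
  (fun θ => 2 * v.2.2.1 θ * deriv f θ + deriv v.2.2.1 θ * f θ,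
   0, 0,
   fun θ => v.2.1 θ * f θ,
   0, 0)

/-- The smoothness/periodicity requirement on the tuple
(γ₀, γ₁, γ₂, γ₃, a, b): the four function components are smooth and 2π-periodic. -/
def IsSmoothPeriodic (v : V) : Prop :=
  ContDiff ℝ (⊤ : ℕ∞) v.1 ∧ ContDiff ℝ (⊤ : ℕ∞) v.2.1 ∧ ContDiff ℝ (⊤ : ℕ∞) v.2.2.1 ∧
    ContDiff ℝ (⊤ : ℕ∞) v.2.2.2.1 ∧
    Function.Periodic v.1 (2 * π) ∧ Function.Periodic v.2.1 (2 * π) ∧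
    Function.Periodic v.2.2.1 (2 * π) ∧ Function.Periodic v.2.2.2.1 (2 * π)

lemma smd {u : ℝ → ℝ} (hu : ContDiff ℝ (⊤ : ℕ∞) u) : ContDiff ℝ (⊤ : ℕ∞) (deriv u) := by
  rw [show ((⊤ : ℕ∞) : WithTop ℕ∞) = ((⊤ : ℕ∞) : WithTop ℕ∞) + 1 from rfl] at hu
  exact (contDiff_succ_iff_deriv.mp hu).2.2

lemma dif {u : ℝ → ℝ} (hu : ContDiff ℝ (⊤ : ℕ∞) u) : Differentiable ℝ u :=
  hu.differentiable (by simp)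

lemma deriv_zero_fun : deriv (0 : ℝ → ℝ) = 0 := by
  funext x; exact deriv_const x 0

lemma deriv_fun_neg_aux (u : ℝ → ℝ) : deriv (fun x => -u x) = fun x => -deriv u x :=
  deriv.neg' (f := u)

/-- Proposition 2 defines a coadjoint representation: the commutators of the
operators ad*_{L_f}, ad*_{J_f}, ad*_{P¹_f}, ad*_{P²_f} reproduce the brackets
of the current form of the planar Galilean conformal algebra (the purely
central brackets acting as 0). -/
theorem coadjoint_representation_property
    (f g : ℝ → ℝ) (hf : ContDiff ℝ (⊤ : ℕ∞) f) (hg : ContDiff ℝ (⊤ : ℕ∞) g)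
    (hfp : Function.Periodic f (2 * π)) (hgp : Function.Periodic g (2 * π))
    (v : V) (hv : IsSmoothPeriodic v) :
    (adL f (adL g v) - adL g (adL f v) =
      adL (fun θ => f θ * deriv g θ - deriv f θ * g θ) v) ∧
    (adL f (adP1 g v) - adP1 g (adL f v) =
      adP1 (fun θ => f θ * deriv g θ - deriv f θ * g θ) v) ∧
    (adL f (adP2 g v) - adP2 g (adL f v) =
      adP2 (fun θ => f θ * deriv g θ - deriv f θ * g θ) v) ∧
    (adL f (adJ g v) - adJ g (adL f v) = adJ (fun θ => f θ * deriv g θ) v) ∧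
    (adJ f (adP1 g v) - adP1 g (adJ f v) = -adP2 (fun θ => f θ * g θ) v) ∧
    (adJ f (adP2 g v) - adP2 g (adJ f v) = adP1 (fun θ => f θ * g θ) v) ∧
    (adJ f (adJ g v) - adJ g (adJ f v) = 0) ∧
    (adP1 f (adP1 g v) - adP1 g (adP1 f v) = 0) ∧
    (adP1 f (adP2 g v) - adP2 g (adP1 f v) = 0) ∧
    (adP2 f (adP2 g v) - adP2 g (adP2 f v) = 0) := by
  obtain ⟨h0, h1, h2, h3, -, -, -, -⟩ := hv
  have Df := dif hf
  have Df1 := dif (smd hf)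
  have Df2 := dif (smd (smd hf))
  have Df3 := dif (smd (smd (smd hf)))
  have Dg := dif hg
  have Dg1 := dif (smd hg)
  have Dg2 := dif (smd (smd hg))
  have Dg3 := dif (smd (smd (smd hg)))
  have D0 := dif h0
  have D01 := dif (smd h0)
  have D1 := dif h1
  have D11 := dif (smd h1)
  have D2 := dif h2
  have D21 := dif (smd h2)
  have D3 := dif h3
  have D31 := dif (smd h3)
  have e1 : deriv (fun θ => f θ * deriv g θ - deriv f θ * g θ) =
      fun θ => f θ * deriv (deriv g) θ - deriv (deriv f) θ * g θ := by
    funext x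
    simp (disch := fun_prop) only [deriv_fun_sub, deriv_fun_mul]
    ring
  have e2 : deriv (fun θ => f θ * deriv (deriv g) θ - deriv (deriv f) θ * g θ) =
      fun θ => deriv f θ * deriv (deriv g) θ + f θ * deriv (deriv (deriv g)) θ -
        (deriv (deriv (deriv f)) θ * g θ + deriv (deriv f) θ * deriv g θ) := by
    funext x
    simp (disch := fun_prop) only [deriv_fun_sub, deriv_fun_mul]
  refine ⟨?_, ?_, ?_, ?_, ?_, ?_, ?_, ?_, ?_, ?_⟩ <;>
  · simp only [adL, adJ, adP1, adP2, Prod.mk_sub_mk, Prod.neg_mk, Prod.mk.injEq,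
      Prod.mk_eq_zero, e1, e2, sub_zero, sub_self, neg_zero, and_true, true_and]
    repeat' apply And.intro
    all_goals try rfl
    all_goals
      funext θ
      simp (disch := fun_prop) only [Pi.sub_apply, Pi.neg_apply, Pi.zero_apply,
        deriv_zero_fun, deriv_fun_add, deriv_fun_sub, deriv_fun_mul, deriv_const_mul, deriv_const',
        deriv_fun_neg_aux, e1, e2]
      try ring

end
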